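/- arXiv:2211.00438 — 7 statements merged into one kernel-verified Lean document; each statement's English description precedes it below -/
import Mathlib

section
/- Let p be a prime, f ≥ 1, and work in the polynomial ring F[b_0,…,b_{f-1}, x_0,…,x_{f-1}] over a field F of characteristic p. The coefficient of ∏_{j=0}^{f-1} x_j^{p-1} in the polynomial ∏_{j=0}^{f-1} (Σ_{i=0}^{f-1} b_i^{p^j} x_i)^{p-1} equals (-1)^{(p^f-1)/(p-1)} · ∏_{c ∈ 𝔽_p^f \ {0}} (Σ_{i=0}^{f-1} c_i b_i), viewed as a polynomial in b_0,…,b_{f-1}. -/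
/-!
Write `q = #K`, `n = #σ` and `L c = ∑ i, c i * b i` for `c : σ → K`. Summing a polynomial of
degree at most `n (q - 1)` over all `K`-points picks out `(-1)^n` times its coefficient of
`∏ i, X i ^ (q - 1)`. By Frobenius, `∏ j < n, (∑ i, b i ^ q ^ j * X i) ^ (q - 1)` takes the
value `L c ^ (q ^ n - 1)` at `c`, so its coefficient is `(-1)^n ∑ c, L c ^ (q ^ n - 1)`.

Frobenius also shows that on `K`-points `L c ^ k` agrees with a polynomial whose degree is the
base-`q` digit sum of `k`; this is `< n (q - 1)` for `k < q ^ n - 1`, so those power sums of the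
`L c` vanish. Newton's identity for the `q ^ n - 1` numbers `L c`, `c ≠ 0`, then identifies
`∑ c, L c ^ (q ^ n - 1)` with `∏ c ≠ 0, L c`.
-/

open Finset

namespace Nat

theorem digits_sum_le_mul_of_lt_pow {b n k : ℕ} (hb : 1 < b) (hk : k < b ^ n) :
    (b.digits k).sum ≤ n * (b - 1) :=
  calc (b.digits k).sum ≤ (b.digits k).length • (b - 1) :=
        List.sum_le_card_nsmul _ _ fun _ hd => Nat.le_sub_one_of_lt (digits_lt_base hb hd)
    _ ≤ n * (b - 1) := Nat.mul_le_mul_right _ ((digits_length_le_iff hb k).2 hk)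

theorem digits_sum_lt_mul_of_lt_pow_sub_one {b : ℕ} (hb : 1 < b) :
    ∀ {n k : ℕ}, k < b ^ n - 1 → (b.digits k).sum < n * (b - 1)
  | 0, k, hk => by simp at hk
  | n + 1, k, hk => by
    rcases k.eq_zero_or_pos with rfl | hk0
    · simp only [digits_zero, List.sum_nil]
      exact Nat.mul_pos n.succ_pos (by omega)
    rw [digits_def' hb hk0, List.sum_cons, Nat.succ_mul]
    have hdiv : k / b < b ^ n := by
      rw [Nat.div_lt_iff_lt_mul (by omega), ← pow_succ]; omega
    have hmod : k % b < b := Nat.mod_lt _ (by omega)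
    rcases Nat.lt_or_ge (k / b) (b ^ n - 1) with hlt | hge
    · have := digits_sum_lt_mul_of_lt_pow_sub_one hb hlt
      omega
    · -- the higher digits of `k` are all `b - 1`, so the last one cannot be
      have := digits_sum_le_mul_of_lt_pow hb hdiv
      suffices k % b < b - 1 by omega
      have hsplit := Nat.div_add_mod k b
      have : b ^ (n + 1) ≤ b * (k / b) + b := by
        rw [pow_succ', ← Nat.mul_add_one]; exact Nat.mul_le_mul_left b (by omega)
      omega

end Nat

open Polynomial in
theorem Finset.sum_pow_card_eq_neg_one_pow_mul_prod {ι A : Type*} [CommRing A] (s : Finset ι)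
    (v : ι → A) (hs : (#s : A) = -1) (h : ∀ k, 0 < k → k < #s → ∑ i ∈ s, v i ^ k = 0) :
    ∑ i ∈ s, v i ^ #s = (-1) ^ #s * ∏ i ∈ s, v i := by
  nontriviality A
  set g : A[X] := ∏ i ∈ s, (X - C (v i))
  have hmonic : g.Monic := monic_prod_of_monic _ _ fun i _ => monic_X_sub_C (v i)
  have hdeg : g.natDegree = #s := by
    rw [natDegree_prod_of_monic _ _ fun i _ => monic_X_sub_C (v i)]
    simp
  have hroot : ∀ i ∈ s, v i ^ #s = -∑ k ∈ range #s, g.coeff k * v i ^ k := by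
    intro i hi
    have h0 : g.eval (v i) = 0 := by
      rw [eval_prod]; exact prod_eq_zero hi (by simp)
    rw [hmonic.as_sum, hdeg] at h0
    simp only [eval_add, eval_pow, eval_X, eval_finsetSum, eval_mul, eval_C] at h0
    exact eq_neg_of_add_eq_zero_left h0
  have hcoeff0 : g.coeff 0 = (-1) ^ #s * ∏ i ∈ s, v i := by
    simp [g, coeff_zero_eq_eval_zero, eval_prod, prod_neg]
  calc ∑ i ∈ s, v i ^ #s = -∑ k ∈ range #s, g.coeff k * ∑ i ∈ s, v i ^ k := by
        simp_rw [sum_congr rfl hroot, sum_neg_distrib, mul_sum]; rw [sum_comm]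
    _ = -(g.coeff 0 * #s) := by
        rw [sum_eq_single 0 (fun k hk hk0 => by rw [h k (by omega) (mem_range.1 hk), mul_zero])
          (fun h0 => by simp_all)]
        simp
    _ = (-1) ^ #s * ∏ i ∈ s, v i := by rw [hs, hcoeff0]; ring

theorem MvPolynomial.totalDegree_sum_C_mul_X_le {σ R : Type*} [Fintype σ] [CommSemiring R]
    (a : σ → R) : (∑ i, C (a i) * X i).totalDegree ≤ 1 :=
  (IsHomogeneous.sum _ _ _ fun i _ => isHomogeneous_C_mul_X (a i) i).totalDegree_le

theorem MvPolynomial.totalDegree_prod_pow_sum_C_mul_X_le {ι σ R : Type*} [Fintype σ]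
    [CommSemiring R] (s : Finset ι) (a : ι → σ → R) (e : ℕ) :
    (∏ j ∈ s, (∑ i, C (a j i) * X i) ^ e).totalDegree ≤ #s * e :=
  (totalDegree_finsetProd _ _).trans ((sum_le_card_nsmul _ _ e fun j _ =>
    (totalDegree_pow _ _).trans ((Nat.mul_le_mul_left _ (totalDegree_sum_C_mul_X_le _)).trans
      (by simp))).trans (by simp))

theorem CharP.neg_one_pow_pow_sub_one_div {R : Type*} [CommRing R] (p : ℕ) [Fact p.Prime]
    [CharP R p] (n : ℕ) : (-1 : R) ^ ((p ^ n - 1) / (p - 1)) = (-1) ^ n := by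
  rw [← Nat.geomSum_eq (Fact.out : p.Prime).two_le, ← prod_pow_eq_pow_sum,
    prod_congr rfl fun j _ => neg_one_pow_char_pow R p j, prod_const, card_range]

namespace FiniteField

variable {K : Type*} [Field K] [Fintype K] {σ : Type*} [Fintype σ]
  {A : Type*} [CommRing A] [Algebra K A]

local notation "q" => Fintype.card K

theorem sum_pow_card_sub_one : ∑ x : K, x ^ (q - 1) = -1 := by
  classical
  have hq : 1 < q := Fintype.one_lt_card
  rw [← sum_erase_add _ _ (mem_univ 0), zero_pow (by omega), add_zero,
    sum_congr rfl fun x hx => pow_card_sub_one_eq_one x (ne_of_mem_erase hx), sum_const,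
    card_erase_of_mem (mem_univ 0), card_univ, nsmul_one, Nat.cast_pred (by omega),
    cast_card_eq_zero, zero_sub]

theorem sum_algebraMap_mul_pow_card_pow (c : σ → K) (b : σ → A) (j : ℕ) :
    (∑ i, algebraMap K A (c i) * b i) ^ q ^ j = ∑ i, algebraMap K A (c i) * b i ^ q ^ j := by
  induction j with
  | zero => simp
  | succ j ih =>
    simp_rw [pow_succ, pow_mul, ih]
    have := map_sum (frobeniusAlgHom K A) (fun i => algebraMap K A (c i) * b i ^ q ^ j) univ
    simp only [map_mul, AlgHom.commutes, coe_frobeniusAlgHom] at this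
    exact this

theorem exists_totalDegree_le_digits_sum_eval_eq_pow (b : σ → A) (k : ℕ) :
    ∃ R : MvPolynomial σ A, R.totalDegree ≤ (Nat.digits q k).sum ∧ ∀ c : σ → K,
      MvPolynomial.eval (fun i => algebraMap K A (c i)) R
        = (∑ i, algebraMap K A (c i) * b i) ^ k := by
  induction k using Nat.strong_induction_on generalizing b with
  | _ k ih =>
  rcases k.eq_zero_or_pos with rfl | hk
  · exact ⟨1, by simp, by simp⟩
  have hq : 1 < q := Fintype.one_lt_card
  obtain ⟨R, hdeg, heval⟩ := ih (k / q) (Nat.div_lt_self hk hq) fun i => b i ^ q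
  refine ⟨(∑ i, MvPolynomial.C (b i) * MvPolynomial.X i) ^ (k % q) * R, ?_, fun c => ?_⟩
  · rw [Nat.digits_def' hq hk, List.sum_cons]
    refine (MvPolynomial.totalDegree_mul _ _).trans (add_le_add ?_ hdeg)
    exact (MvPolynomial.totalDegree_pow _ _).trans
      (by simpa using Nat.mul_le_mul_left (k % q) (MvPolynomial.totalDegree_sum_C_mul_X_le b))
  · have hfrob := sum_algebraMap_mul_pow_card_pow c b 1
    rw [pow_one] at hfrob
    simp only [map_mul, map_pow, map_sum, MvPolynomial.eval_C, MvPolynomial.eval_X, heval]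
    simp_rw [mul_comm (b _)]
    rw [← hfrob, ← pow_mul, ← pow_add, Nat.mod_add_div]

theorem eval_prod_sum_C_pow_card_pow_mul_X (b : σ → A) (c : σ → K) :
    MvPolynomial.eval (fun i => algebraMap K A (c i))
      (∏ j ∈ range (Fintype.card σ),
        (∑ i, MvPolynomial.C (b i ^ q ^ j) * MvPolynomial.X i) ^ (q - 1))
      = (∑ i, algebraMap K A (c i) * b i) ^ (q ^ Fintype.card σ - 1) := by
  have hq : 1 < q := Fintype.one_lt_card
  simp only [map_prod, map_pow, map_sum, map_mul, MvPolynomial.eval_C, MvPolynomial.eval_X]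
  simp_rw [mul_comm (b _ ^ _), ← sum_algebraMap_mul_pow_card_pow, ← pow_mul,
    prod_pow_eq_pow_sum, ← sum_mul]
  have hgeom := geom_sum_mul_add (q - 1) (Fintype.card σ)
  rw [Nat.sub_add_cancel hq.le] at hgeom
  rw [← hgeom, Nat.add_sub_cancel]

section

variable [DecidableEq σ]

theorem sum_prod_pow_eq (d : σ → ℕ) (hd : ∑ i, d i ≤ Fintype.card σ * (q - 1)) :
    ∑ x : σ → K, ∏ i, x i ^ d i
      = if d = fun _ => q - 1 then (-1) ^ Fintype.card σ else 0 := by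
  rw [← Fintype.prod_sum (fun i (t : K) => t ^ d i)]
  split_ifs with h
  · simp [h, sum_pow_card_sub_one]
  obtain ⟨i, hi⟩ : ∃ i, d i < q - 1 := by
    by_contra! hge
    refine h (funext fun i => (hge i).antisymm' (not_lt.1 fun hlt => ?_))
    have := sum_lt_sum (fun j _ => hge j) ⟨i, mem_univ i, hlt⟩
    simp only [sum_const, card_univ, smul_eq_mul] at this
    omega
  exact prod_eq_zero (mem_univ i) (sum_pow_lt_card_sub_one K _ hi)

theorem _root_.MvPolynomial.sum_eval_algebraMap_eq_neg_one_pow_mul_coeff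
    (R : MvPolynomial σ A) (hR : R.totalDegree ≤ Fintype.card σ * (q - 1)) :
    ∑ x : σ → K, MvPolynomial.eval (fun i => algebraMap K A (x i)) R
      = (-1) ^ Fintype.card σ * R.coeff (Finsupp.equivFunOnFinite.symm fun _ => q - 1) := by
  have hmon : ∀ d ∈ R.support, ∑ x : σ → K, R.coeff d * ∏ i, algebraMap K A (x i) ^ d i
      = if d = Finsupp.equivFunOnFinite.symm (fun _ => q - 1)
        then (-1) ^ Fintype.card σ * R.coeff d else 0 := by
    intro d hd
    have hdeg : ∑ i, d i ≤ Fintype.card σ * (q - 1) :=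
      (Finsupp.sum_fintype d _ fun _ => rfl).symm.trans_le
        ((MvPolynomial.le_totalDegree hd).trans hR)
    have hconst : (⇑d = fun _ => q - 1) ↔ d = Finsupp.equivFunOnFinite.symm fun _ => q - 1 :=
      Finsupp.equivFunOnFinite.eq_symm_apply.symm
    rw [← mul_sum]
    simp_rw [← map_pow, ← map_prod]
    rw [← map_sum, sum_prod_pow_eq _ hdeg]
    simp only [hconst]
    split_ifs <;> simp [mul_comm]
  simp_rw [MvPolynomial.eval_eq']
  rw [sum_comm, sum_congr rfl hmon, sum_ite_eq']
  split_ifs with h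
  · rfl
  · rw [MvPolynomial.notMem_support_iff.1 h, mul_zero]

theorem sum_pow_sum_algebraMap_mul_eq_zero (b : σ → A) {k : ℕ}
    (hk : k < q ^ Fintype.card σ - 1) :
    ∑ c : σ → K, (∑ i, algebraMap K A (c i) * b i) ^ k = 0 := by
  have hq : 1 < q := Fintype.one_lt_card
  obtain ⟨R, hdeg, heval⟩ := exists_totalDegree_le_digits_sum_eval_eq_pow (K := K) b k
  have hlt : R.totalDegree < Fintype.card σ * (q - 1) :=
    hdeg.trans_lt (Nat.digits_sum_lt_mul_of_lt_pow_sub_one hq hk)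
  simp_rw [← heval]
  rw [MvPolynomial.sum_eval_algebraMap_eq_neg_one_pow_mul_coeff R hlt.le,
    MvPolynomial.coeff_eq_zero_of_totalDegree_lt, mul_zero]
  convert hlt using 1
  exact (Finsupp.sum_fintype _ (fun _ e => e) fun _ => rfl).trans (by simp)

theorem sum_pow_sum_algebraMap_mul_eq_prod [DecidableEq K] [Nonempty σ] (b : σ → A) :
    ∑ c : σ → K, (∑ i, algebraMap K A (c i) * b i) ^ (q ^ Fintype.card σ - 1)
      = ∏ c ∈ univ.filter (fun c : σ → K => c ≠ 0), ∑ i, algebraMap K A (c i) * b i := by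
  set n := Fintype.card σ
  set L : (σ → K) → A := fun c => ∑ i, algebraMap K A (c i) * b i
  set s := univ.filter (fun c : σ → K => c ≠ 0)
  have hq : 1 < q := Fintype.one_lt_card
  have hn : 0 < n := Fintype.card_pos
  have hqn : 1 < q ^ n := Nat.one_lt_pow hn.ne' hq
  have hcard : #s = q ^ n - 1 := by
    simp [s, n, filter_ne']
  have hcardA : (#s : A) = -1 := by
    rw [hcard, Nat.cast_pred (by omega), Nat.cast_pow, ← map_natCast (algebraMap K A),
      cast_card_eq_zero, map_zero, zero_pow hn.ne', zero_sub]
  have hsum : ∀ k, 0 < k → ∑ c ∈ s, L c ^ k = ∑ c, L c ^ k := fun k hk =>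
    sum_filter_of_ne fun c _ hc h0 => hc (by simp [L, h0, zero_pow hk.ne'])
  have hsign : (-1 : A) ^ (q ^ n - 1) = 1 := by
    obtain ⟨t, ht⟩ := Nat.sub_one_dvd_pow_sub_one q n
    rw [ht, pow_mul, show (-1 : A) = algebraMap K A (-1) by simp, ← map_pow,
      pow_card_sub_one_eq_one _ (neg_ne_zero.2 one_ne_zero), map_one, one_pow]
  have hnewton := sum_pow_card_eq_neg_one_pow_mul_prod s L hcardA fun k hk hks => by
    rw [hsum k hk]; exact sum_pow_sum_algebraMap_mul_eq_zero b (hcard ▸ hks)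
  rw [← hsum _ (by omega), ← hcard, hnewton, hcard, hsign, one_mul]

theorem coeff_prod_sum_C_pow_card_pow_mul_X [DecidableEq K] [Nonempty σ] (b : σ → A) :
    MvPolynomial.coeff (Finsupp.equivFunOnFinite.symm fun _ => q - 1)
      (∏ j ∈ range (Fintype.card σ),
        (∑ i, MvPolynomial.C (b i ^ q ^ j) * MvPolynomial.X i) ^ (q - 1))
    = (-1) ^ Fintype.card σ *
        ∏ c ∈ univ.filter (fun c : σ → K => c ≠ 0), ∑ i, algebraMap K A (c i) * b i := by
  have hextract := MvPolynomial.sum_eval_algebraMap_eq_neg_one_pow_mul_coeff (K := K) _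
    ((MvPolynomial.totalDegree_prod_pow_sum_C_mul_X_le (range (Fintype.card σ))
      (fun j i => b i ^ q ^ j) (q - 1)).trans_eq (by rw [card_range]))
  simp only [eval_prod_sum_C_pow_card_pow_mul_X, sum_pow_sum_algebraMap_mul_eq_prod] at hextract
  rw [hextract, ← mul_assoc, ← pow_add, Even.neg_one_pow ⟨_, rfl⟩, one_mul]

end

end FiniteField

/-- The coefficient of `∏ x_j^(p-1)` in `∏_j (∑_i b_i^(p^j) x_i)^(p-1)`, viewed as a
polynomial in the `b_i` (coefficients in `MvPolynomial (Fin f) F`), equals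
`(-1)^((p^f-1)/(p-1)) ∏_{c ∈ 𝔽_p^f \ {0}} (∑_i c_i b_i)`. -/
theorem stmt1 (p f : ℕ) [Fact p.Prime] (hf : 1 ≤ f) (F : Type*) [Field F] [CharP F p] :
    MvPolynomial.coeff (Finsupp.equivFunOnFinite.symm fun _ : Fin f => p - 1)
      (∏ j : Fin f,
        (∑ i : Fin f,
          MvPolynomial.C ((MvPolynomial.X i : MvPolynomial (Fin f) F) ^ p ^ (j : ℕ)) *
            MvPolynomial.X i) ^ (p - 1))
    = (-1) ^ ((p ^ f - 1) / (p - 1)) *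
        ∏ c ∈ Finset.univ.filter (fun c : Fin f → ZMod p => c ≠ 0),
          ∑ i : Fin f,
            MvPolynomial.C (ZMod.castHom (dvd_refl p) F (c i)) * MvPolynomial.X i := by
  let : Algebra (ZMod p) F := ZMod.algebra F p
  have : Nonempty (Fin f) := ⟨⟨0, hf⟩⟩
  have key := FiniteField.coeff_prod_sum_C_pow_card_pow_mul_X (K := ZMod p)
    (MvPolynomial.X : Fin f → MvPolynomial (Fin f) F)
  simp only [ZMod.card, Fintype.card_fin] at key
  rw [CharP.neg_one_pow_pow_sub_one_div p, Fin.prod_univ_eq_prod_range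
    (fun j => (∑ i : Fin f, MvPolynomial.C ((MvPolynomial.X i : MvPolynomial (Fin f) F) ^ p ^ j) *
      MvPolynomial.X i) ^ (p - 1)), key]
  -- `algebraMap (ZMod p) (MvPolynomial (Fin f) F)` is `C ∘ ZMod.castHom _ F` by definition
  rfl
end

section
/- Let q = p^f and let F be a field containing 𝔽_q. The f maps φ_i : 𝔽_q → F defined by φ_i(a) = a^{p^i} for 0 ≤ i ≤ f-1 form an F-basis of the F-vector space Hom_{𝔽_p}(𝔽_q, F) of 𝔽_p-linear maps from 𝔽_q to F. -/
/-!
Write `σ` for the Frobenius `a ↦ a ^ #k` of `L/k`. Its powers `σ ^ j`, `j < [L : k]`, are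
pairwise distinct, so the `k`-algebra maps `i ∘ σ ^ j : L → F` are distinct, and they are
`F`-linearly independent by Dedekind's lemma. There are `[L : k] = dim_F Hom_k(L, F)` of them.
-/

open Module FiniteField

def RingHom.toZModAlgHom (n : ℕ) {A B : Type*} [Semiring A] [Semiring B]
    [Algebra (ZMod n) A] [Algebra (ZMod n) B] (i : A →+* B) : A →ₐ[ZMod n] B where
  toRingHom := i
  commutes' r := RingHom.congr_fun
    (Subsingleton.elim (i.comp (algebraMap (ZMod n) A)) (algebraMap (ZMod n) B)) r

@[simp]
theorem RingHom.coe_toZModAlgHom (n : ℕ) {A B : Type*} [Semiring A] [Semiring B]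
    [Algebra (ZMod n) A] [Algebra (ZMod n) B] (i : A →+* B) : ⇑(i.toZModAlgHom n) = i :=
  rfl

namespace FiniteField

variable (k L : Type*) {F : Type*} [Field k] [Fintype k] [Field L] [Finite L] [Algebra k L]
  [Field F] [Algebra k F]

theorem injective_algHom_comp_frobeniusAlgEquivOfAlgebraic_pow (i : L →ₐ[k] F) :
    Function.Injective fun j : Fin (finrank k L) ↦
      i.comp (frobeniusAlgEquivOfAlgebraic k L ^ (j : ℕ) : L ≃ₐ[k] L).toAlgHom := by
  intro j j' h
  refine (bijective_frobeniusAlgEquivOfAlgebraic_pow k L).injective (AlgEquiv.ext fun a ↦ ?_)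
  exact i.toRingHom.injective (AlgHom.congr_fun h a)

theorem linearIndependent_algHom_comp_frobeniusAlgEquivOfAlgebraic_pow (i : L →ₐ[k] F) :
    LinearIndependent F fun j : Fin (finrank k L) ↦
      (i.comp (frobeniusAlgEquivOfAlgebraic k L ^ (j : ℕ) : L ≃ₐ[k] L).toAlgHom).toLinearMap :=
  (linearIndependent_toLinearMap k L F).comp _
    (injective_algHom_comp_frobeniusAlgEquivOfAlgebraic_pow k L i)

noncomputable def frobeniusPowBasis (i : L →ₐ[k] F) :
    Basis (Fin (finrank k L)) F (L →ₗ[k] F) :=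
  haveI : Nonempty (Fin (finrank k L)) := ⟨⟨0, finrank_pos⟩⟩
  basisOfLinearIndependentOfCardEqFinrank
    (linearIndependent_algHom_comp_frobeniusAlgEquivOfAlgebraic_pow k L i)
    (by rw [Fintype.card_fin, finrank_linearMap_self])

theorem frobeniusPowBasis_apply (i : L →ₐ[k] F) (j : Fin (finrank k L)) (a : L) :
    frobeniusPowBasis k L i j a = i a ^ Fintype.card k ^ (j : ℕ) := by
  simp [frobeniusPowBasis, AlgEquiv.coe_pow, coe_frobeniusAlgEquivOfAlgebraic_iterate]

end FiniteField

theorem stmt4_general (p f : ℕ) [Fact p.Prime]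
    (K F : Type*) [Field K] [Fintype K] [Field F]
    (hcard : Fintype.card K = p ^ f)
    [Algebra (ZMod p) K] [Algebra (ZMod p) F]
    (i : K →+* F) :
    ∃ φ : Fin f → (K →ₗ[ZMod p] F),
      (∀ (j : Fin f) (a : K), φ j a = i a ^ p ^ (j : ℕ)) ∧
      LinearIndependent F φ ∧ Submodule.span F (Set.range φ) = ⊤ := by
  have hfinrank : finrank (ZMod p) K = f := by
    have hp : 1 < p := (Fact.out : p.Prime).one_lt
    rw [card_eq_pow_finrank (K := ZMod p), ZMod.card] at hcard
    exact Nat.pow_right_injective hp hcard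
  subst hfinrank
  let b := frobeniusPowBasis (ZMod p) K (i.toZModAlgHom p)
  refine ⟨b, fun j a ↦ ?_, b.linearIndependent, b.span_eq⟩
  rw [frobeniusPowBasis_apply, ZMod.card, RingHom.coe_toZModAlgHom]

/-- The maps `a ↦ a^(p^i)` (`0 ≤ i ≤ f-1`), from a finite field `K` with `p^f` elements
into a field `F` containing it, form an `F`-basis of the `F`-vector space of
`𝔽_p`-linear maps `K → F`. -/
theorem stmt4 (p f : ℕ) [Fact p.Prime] (hf : 1 ≤ f)
    (K F : Type*) [Field K] [Fintype K] [Field F]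
    (hcard : Fintype.card K = p ^ f)
    [Algebra (ZMod p) K] [Algebra (ZMod p) F]
    (i : K →+* F) :
    ∃ φ : Fin f → (K →ₗ[ZMod p] F),
      (∀ (j : Fin f) (a : K), φ j a = i a ^ p ^ (j : ℕ)) ∧
      LinearIndependent F φ ∧ Submodule.span F (Set.range φ) = ⊤ :=
  stmt4_general p f K F hcard i
end

section
/- Let F be a field, q ≥ 2 an integer, and let φ_q be the F-linear endomorphism of the field of Laurent series F((T)) defined by φ_q(Σ c_n T^n) = Σ c_n T^{nq}. Suppose x ∈ F((T)) is nonzero and satisfies φ_q^d(x) = T^N · x for some d ≥ 1 and N ∈ ℤ. Then (q^d - 1) divides N and x = λ T^{N/(q^d-1)} for some λ ∈ F^×. -/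
/-!
Comparing coefficients, `φ_q^d(x) = T^N x` says that `x` has the same coefficient at `n` as at
`Q n - N`, where `Q = q^d`, and that every exponent `n` of `x` has `Q ∣ n + N` with `(n + N) / Q`
again an exponent. Applied to the lowest exponent `v` of `x`, the two facts force
`N = (Q - 1) v`. Then `n ↦ (n + N) / Q = v + (n - v) / Q` maps the support into itself, so for
every exponent `n` the difference `n - v` is divisible by every power of `Q`, i.e. `n = v`.
-/

namespace LaurentSeries

theorem coeff_iterate_of_coeff_eq_ite {R : Type*} [Zero R] {q : ℤ} (hq : q ≠ 0)
    {φ : LaurentSeries R → LaurentSeries R}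
    (hφ : ∀ x m, (φ x).coeff m = if q ∣ m then x.coeff (m / q) else 0) (k : ℕ)
    (x : LaurentSeries R) (m : ℤ) :
    (φ^[k] x).coeff m = if q ^ k ∣ m then x.coeff (m / q ^ k) else 0 := by
  induction k generalizing m with
  | zero => simp
  | succ k ih =>
    rw [Function.iterate_succ_apply', hφ]
    by_cases hm : q ∣ m
    · obtain ⟨t, rfl⟩ := hm
      rw [if_pos (dvd_mul_right q t), Int.mul_ediv_cancel_left _ hq, ih, pow_succ']
      simp only [mul_dvd_mul_iff_left hq]
      split_ifs with ht
      · obtain ⟨s, rfl⟩ := ht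
        rw [← mul_assoc, Int.mul_ediv_cancel_left _ (mul_ne_zero hq (pow_ne_zero k hq)),
          Int.mul_ediv_cancel_left _ (pow_ne_zero k hq)]
      · rfl
    · have hmk : ¬q ^ (k + 1) ∣ m := fun h => hm ((dvd_pow_self q k.succ_ne_zero).trans h)
      rw [if_neg hm, if_neg hmk]

variable {R : Type*} [Zero R] {Q N : ℤ} {x : LaurentSeries R}

theorem coeff_mul_sub_eq (h : ∀ m, x.coeff (m - N) = if Q ∣ m then x.coeff (m / Q) else 0)
    (hQ : Q ≠ 0) (n : ℤ) : x.coeff (Q * n - N) = x.coeff n := by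
  simpa [Int.mul_ediv_cancel_left _ hQ] using h (Q * n)

theorem dvd_add_and_coeff_ediv_ne_zero
    (h : ∀ m, x.coeff (m - N) = if Q ∣ m then x.coeff (m / Q) else 0) {n : ℤ}
    (hn : x.coeff n ≠ 0) : Q ∣ n + N ∧ x.coeff ((n + N) / Q) ≠ 0 := by
  have hnN := h (n + N)
  rw [add_sub_cancel_right] at hnN
  split_ifs at hnN with hdvd
  · exact ⟨hdvd, hnN ▸ hn⟩
  · exact absurd hnN hn

theorem eq_sub_one_mul_order (h : ∀ m, x.coeff (m - N) = if Q ∣ m then x.coeff (m / Q) else 0)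
    (hQ : 1 < Q) (hx : x ≠ 0) : N = (Q - 1) * x.order := by
  have hv : x.coeff x.order ≠ 0 := HahnSeries.coeff_order_eq_zero.not.mpr hx
  have hle : x.order ≤ Q * x.order - N :=
    x.order_le_of_coeff_ne_zero (by rwa [coeff_mul_sub_eq h (by omega)])
  obtain ⟨⟨u, hu⟩, hu0⟩ := dvd_add_and_coeff_ediv_ne_zero h hv
  rw [hu, Int.mul_ediv_cancel_left _ (by omega)] at hu0
  have hge : x.order ≤ u := x.order_le_of_coeff_ne_zero hu0
  nlinarith

theorem pow_dvd_sub_of_coeff_ne_zero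
    (h : ∀ m, x.coeff (m - N) = if Q ∣ m then x.coeff (m / Q) else 0) (hQ : Q ≠ 0)
    {v : ℤ} (hN : N = (Q - 1) * v) (k : ℕ) {n : ℤ} (hn : x.coeff n ≠ 0) :
    Q ^ k ∣ n - v := by
  induction k generalizing n with
  | zero => simp
  | succ k ih =>
    obtain ⟨⟨u, hu⟩, hu0⟩ := dvd_add_and_coeff_ediv_ne_zero h hn
    rw [hu, Int.mul_ediv_cancel_left _ hQ] at hu0
    have hnv : n - v = Q * (u - v) := by linear_combination hu - hN
    rw [hnv, pow_succ']
    exact mul_dvd_mul_left Q (ih hu0)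

theorem eq_single_of_coeff_sub_eq_ite
    (h : ∀ m, x.coeff (m - N) = if Q ∣ m then x.coeff (m / Q) else 0) (hQ : 1 < Q.natAbs)
    {v : ℤ} (hN : N = (Q - 1) * v) : x = HahnSeries.single v (x.coeff v) := by
  ext n
  rw [HahnSeries.coeff_single]
  split_ifs with hnv
  · rw [hnv]
  · by_contra hn
    refine hnv (sub_eq_zero.mp (Int.eq_zero_of_dvd_of_natAbs_lt_natAbs
      (pow_dvd_sub_of_coeff_ne_zero h (by rintro rfl; simp at hQ) hN (n - v).natAbs hn) ?_))
    rw [Int.natAbs_pow]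
    exact Nat.lt_pow_self hQ

end LaurentSeries

open LaurentSeries in
/-- Let `φ_q` be the `F`-linear endomorphism of `F((T))` substituting `T ↦ T^q`
(characterized on coefficients). If `x ≠ 0` satisfies `φ_q^d(x) = T^N·x`, then
`(q^d - 1) ∣ N` and `x = λ·T^(N/(q^d-1))` for some `λ ∈ F^×`. -/
theorem stmt6 (F : Type*) [Field F] (q : ℕ) (hq : 2 ≤ q)
    (φ : LaurentSeries F → LaurentSeries F)
    (hφ : ∀ (x : LaurentSeries F) (m : ℤ),
      (φ x).coeff m = if ((q : ℤ)) ∣ m then x.coeff (m / (q : ℤ)) else 0)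
    (d : ℕ) (hd : 1 ≤ d) (N : ℤ)
    (x : LaurentSeries F) (hx : x ≠ 0)
    (heq : φ^[d] x = HahnSeries.single N (1 : F) * x) :
    ((q : ℤ) ^ d - 1) ∣ N ∧
      ∃ l : F, l ≠ 0 ∧ x = HahnSeries.single (N / ((q : ℤ) ^ d - 1)) l := by
  have hQ : 1 < (q : ℤ) ^ d := one_lt_pow₀ (by omega) (by omega)
  have hcoeff : ∀ m, x.coeff (m - N) =
      if (q : ℤ) ^ d ∣ m then x.coeff (m / (q : ℤ) ^ d) else 0 := by
    intro m
    rw [← coeff_iterate_of_coeff_eq_ite (by omega) hφ, heq]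
    conv_rhs => rw [← sub_add_cancel m N]
    rw [HahnSeries.coeff_single_mul_add, one_mul]
  have hN := eq_sub_one_mul_order hcoeff hQ hx
  refine ⟨⟨_, hN⟩, _, HahnSeries.coeff_order_eq_zero.not.mpr hx, ?_⟩
  rw [hN, Int.mul_ediv_cancel_left _ (by omega)]
  exact eq_single_of_coeff_sub_eq_ite hcoeff (by omega) hN
end

section
/- Let R be a commutative ring, I ⊆ R an ideal with R complete and separated for the I-adic topology, and let φ : R → R be a ring endomorphism with φ(I) ⊆ I^2. Then for every u ∈ 1 + I there exists a unique C ∈ 1 + I satisfying C = u·φ(C); moreover C equals the (I-adically convergent) infinite product ∏_{n≥0} φ^n(u). -/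
/-!
The map `T C = u * φ C` is an `I`-adic contraction: if `C ≡ C' [mod I^(k+1)]` then
`T C ≡ T C' [mod I^(2k+2)]`, which is finer than `I^(k+2)`. As in Banach's fixed point theorem,
the iterates `T^[m] 1 = ∏_{n<m} φ^n(u)` are then `I`-adically Cauchy, their limit is a fixed
point by completeness, and two fixed points congruent mod `I` agree modulo every `I^n`, hence are
equal by separatedness.
-/

open Function Finset

section AdicLimits

variable {R : Type*} [CommRing R] {I : Ideal R}

theorem RingHom.map_mem_pow_of_forall_mem {S : Type*} [CommRing S] {J : Ideal S} (f : R →+* S)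
    (hf : ∀ a ∈ I, f a ∈ J) {x : R} {k : ℕ} (hx : x ∈ I ^ k) : f x ∈ J ^ k := by
  have hIJ : I.map f ≤ J := Ideal.map_le_iff_le_comap.2 hf
  have hmap : (I ^ k).map f ≤ J ^ k := by
    rw [Ideal.map_pow]
    exact Ideal.pow_right_mono hIJ k
  exact hmap (Ideal.mem_map_of_mem f hx)

theorem IsHausdorff.eq_of_forall_sub_mem_pow [IsHausdorff I R] {x y : R}
    (h : ∀ n, x - y ∈ I ^ n) : x = y :=
  (IsHausdorff.eq_iff_smodEq (I := I)).2 fun n => by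
    rw [SModEq.sub_mem, smul_eq_mul, Ideal.mul_top]
    exact h n

theorem IsPrecomplete.exists_forall_sub_mem_pow [IsPrecomplete I R] {f : ℕ → R}
    (hf : ∀ n, f (n + 1) - f n ∈ I ^ n) : ∃ L, ∀ n, f n - L ∈ I ^ n := by
  have hcauchy : ∀ {m n}, m ≤ n → f m - f n ∈ I ^ m := by
    intro m n hmn
    induction n, hmn using Nat.le_induction with
    | base => simp
    | succ n hmn ih =>
      have hstep : f n - f (n + 1) ∈ I ^ m :=
        Ideal.pow_le_pow_right hmn (by simpa using neg_mem (hf n))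
      simpa using add_mem ih hstep
  obtain ⟨L, hL⟩ := IsPrecomplete.prec (I := I) (M := R) inferInstance fun hmn => by
    rw [SModEq.sub_mem, smul_eq_mul, Ideal.mul_top]
    exact hcauchy hmn
  refine ⟨L, fun n => ?_⟩
  simpa only [SModEq.sub_mem, smul_eq_mul, Ideal.mul_top] using hL n

end AdicLimits

/-- Only differences already in `I` are required to shrink: `x ↦ u * φ x` does not map `I ^ 0 = ⊤`
into `I`. -/
def Ideal.IsAdicContraction {R : Type*} [CommRing R] (I : Ideal R) (T : R → R) : Prop :=
  ∀ k x y, x - y ∈ I ^ (k + 1) → T x - T y ∈ I ^ (k + 2)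

namespace Ideal.IsAdicContraction

variable {R : Type*} [CommRing R] {I : Ideal R} {T : R → R}

theorem iterate_sub_mem_pow (hT : I.IsAdicContraction T) {x y : R} (h : x - y ∈ I) (n : ℕ) :
    T^[n] x - T^[n] y ∈ I ^ (n + 1) := by
  induction n with
  | zero => simpa using h
  | succ n ih =>
    simpa only [iterate_succ_apply'] using hT n _ _ ih

theorem eq_of_isFixedPt [IsHausdorff I R] (hT : I.IsAdicContraction T) {x y : R}
    (hx : IsFixedPt T x) (hy : IsFixedPt T y) (h : x - y ∈ I) : x = y :=
  IsHausdorff.eq_of_forall_sub_mem_pow (I := I) fun n => by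
    rw [← (hx.iterate n).eq, ← (hy.iterate n).eq]
    exact Ideal.pow_le_pow_right n.le_succ (hT.iterate_sub_mem_pow h n)

theorem exists_isFixedPt [IsAdicComplete I R] (hT : I.IsAdicContraction T) {x₀ : R}
    (h₀ : T x₀ - x₀ ∈ I) :
    ∃ L, L - x₀ ∈ I ∧ IsFixedPt T L ∧ ∀ n, T^[n] x₀ - L ∈ I ^ n := by
  have hsucc (n : ℕ) : T^[n + 1] x₀ - T^[n] x₀ ∈ I ^ n := by
    rw [iterate_succ_apply]
    exact Ideal.pow_le_pow_right n.le_succ (hT.iterate_sub_mem_pow h₀ n)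
  obtain ⟨L, hL⟩ := IsPrecomplete.exists_forall_sub_mem_pow (f := (T^[·] x₀)) hsucc
  refine ⟨L, ?_, ?_, hL⟩
  · have h₁ : T x₀ - L ∈ I := by simpa using hL 1
    simpa using sub_mem h₀ h₁
  · -- `T L` and `L` are both limits of the iterates, at every precision
    refine IsHausdorff.eq_of_forall_sub_mem_pow (I := I) fun n => ?_
    have hT' : T^[n + 2] x₀ - T L ∈ I ^ (n + 2) := by
      rw [iterate_succ_apply']
      exact hT _ _ _ (hL (n + 1))
    have hL' : T^[n + 2] x₀ - L ∈ I ^ (n + 2) := hL (n + 2)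
    have hfix : T L - L ∈ I ^ (n + 2) := by simpa using sub_mem hL' hT'
    exact Ideal.pow_le_pow_right (by omega) hfix

end Ideal.IsAdicContraction

theorem Ideal.isAdicContraction_mul_map {R : Type*} [CommRing R] {I : Ideal R} {φ : R →+* R}
    (hφ : ∀ a ∈ I, φ a ∈ I ^ 2) (u : R) : I.IsAdicContraction (fun x => u * φ x) := by
  intro k x y h
  have hφxy : φ (x - y) ∈ I ^ (2 * (k + 1)) := by
    rw [pow_mul]
    exact φ.map_mem_pow_of_forall_mem hφ h
  rw [← mul_sub, ← map_sub]
  exact Ideal.mul_mem_left _ _ (Ideal.pow_le_pow_right (by omega) hφxy)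

theorem iterate_mul_map_one {M F : Type*} [CommMonoid M] [FunLike F M M] [MonoidHomClass F M M]
    (φ : F) (u : M) (m : ℕ) :
    (fun x => u * φ x)^[m] 1 = ∏ n ∈ range m, (⇑φ)^[n] u := by
  induction m with
  | zero => simp
  | succ m ih =>
    rw [iterate_succ_apply', ih, prod_range_succ', map_prod]
    simp only [iterate_succ_apply', iterate_zero_apply, mul_comm u]

/-- Let `R` be `I`-adically complete and separated and `φ : R → R` a ring endomorphism
with `φ(I) ⊆ I²`. For every `u ∈ 1 + I` there is a unique `C ∈ 1 + I` with `C = u·φ(C)`;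
moreover `C` is the `I`-adic limit of the partial products `∏_{n<m} φ^n(u)`. -/
theorem stmt9 (R : Type*) [CommRing R] (I : Ideal R) [IsAdicComplete I R]
    (φ : R →+* R) (hφ : ∀ a ∈ I, φ a ∈ I ^ 2)
    (u : R) (hu : u - 1 ∈ I) :
    (∃! C : R, C - 1 ∈ I ∧ C = u * φ C) ∧
    (∀ C : R, C - 1 ∈ I → C = u * φ C →
      ∀ k : ℕ, ∃ N : ℕ, ∀ m ≥ N,
        (∏ n ∈ Finset.range m, (⇑φ)^[n] u) - C ∈ I ^ k) := by
  have hT := I.isAdicContraction_mul_map hφ u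
  obtain ⟨L, hL1, hLfix, hLlim⟩ := hT.exists_isFixedPt (x₀ := 1) (by simpa using hu)
  have huniq (C : R) (hC1 : C - 1 ∈ I) (hCfix : C = u * φ C) : C = L :=
    hT.eq_of_isFixedPt hCfix.symm hLfix (by simpa using sub_mem hC1 hL1)
  refine ⟨⟨L, ⟨hL1, hLfix.symm⟩, fun C hC => huniq C hC.1 hC.2⟩,
    fun C hC1 hCfix k => ⟨k, fun m hm => ?_⟩⟩
  rw [huniq C hC1 hCfix, ← iterate_mul_map_one]
  exact Ideal.pow_le_pow_right hm (hLlim m)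
end

section
/- Let f ≥ 1 and let S ⊆ ℤ/2fℤ be a subset such that for every x ∈ ℤ/2fℤ, exactly one of x and x+f lies in S. Let d be the smallest positive integer such that S - d = S (translation of S by -d). Then: (a) d divides 2f but d does not divide f; (b) d is even; (c) the cardinality of {j ∈ ℤ : 0 ≤ j ≤ d-1, (j mod 2f) ∈ S} equals d/2. -/
/-! The translations preserving `S` form its stabilizer `H ≤ ℤ/2fℤ`, and since `d` is the least
positive integer in `H`, an integer lies in `H` exactly when `d` divides it. Now `2f ∈ H`, while
`f ∉ H` because `S` is a section; so `d ∣ 2f`, `d ∤ f`, and therefore `d = 2e` with `f ≡ e mod d`.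
Translation by `e` then acts on `S` like translation by `f`: exactly one of `j` and `j + e` lies
in `S`, and `[0, d)` is the disjoint union of the `e` pairs `{j, j + e}` with `j < e`. -/

open Pointwise Finset

theorem AddSubgroup.dvd_of_nsmul_mem {G : Type*} [AddGroup G] {H : AddSubgroup G} {g : G}
    {d m : ℕ} (hd : 0 < d) (hdH : d • g ∈ H) (hmin : ∀ e, 0 < e → e • g ∈ H → d ≤ e)
    (hm : m • g ∈ H) : d ∣ m := by
  have hmod : (m % d) • g ∈ H := by
    rwa [← Nat.mod_add_div m d, add_nsmul, mul_nsmul,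
      H.add_mem_cancel_right (H.nsmul_mem hdH _)] at hm
  by_contra hdm
  exact (hmin _ (Nat.pos_of_ne_zero (mt Nat.dvd_of_mod_eq_zero hdm)) hmod).not_gt (Nat.mod_lt m hd)

theorem Nat.exists_eq_two_mul_of_dvd_two_mul_of_not_dvd {d f : ℕ} (h : d ∣ 2 * f) (h' : ¬d ∣ f) :
    ∃ e t, d = 2 * e ∧ f = e + d * t := by
  obtain ⟨k, hk⟩ := h
  obtain ⟨t, rfl | rfl⟩ := Nat.even_or_odd' k
  · exact absurd ⟨t, by linarith⟩ h'
  · have hd : Even d := (Nat.even_mul.1 ⟨f, by linarith⟩).resolve_right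
      (Nat.not_even_iff_odd.2 (odd_two_mul_add_one t))
    obtain ⟨e, rfl⟩ := hd
    exact ⟨e, t, (two_mul e).symm, by linarith⟩

theorem AddSubgroup.natCast_mem_iff_dvd {R : Type*} [AddGroupWithOne R] {H : AddSubgroup R}
    {d : ℕ} (hd : 0 < d) (hdH : (d : R) ∈ H) (hmin : ∀ e : ℕ, 0 < e → (e : R) ∈ H → d ≤ e)
    (m : ℕ) : (m : R) ∈ H ↔ d ∣ m := by
  simp only [← nsmul_one] at hdH hmin ⊢
  refine ⟨dvd_of_nsmul_mem hd hdH hmin, ?_⟩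
  rintro ⟨t, rfl⟩
  rw [mul_nsmul]
  exact H.nsmul_mem hdH t

theorem Finset.card_filter_range_two_mul_of_xor {p : ℕ → Prop} [DecidablePred p] {e : ℕ}
    (hp : ∀ j, Xor (p j) (p (j + e))) : #{j ∈ range (2 * e) | p j} = e := by
  rw [two_mul, card_filter, sum_range_add, ← sum_add_distrib]
  calc ∑ j ∈ range e, ((if p j then 1 else 0) + if p (e + j) then 1 else 0)
      = ∑ _j ∈ range e, 1 := sum_congr rfl fun j _ => by
        have := hp j
        rw [add_comm] at this
        split_ifs <;> simp_all [xor_def]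
    _ = e := by simp

namespace AddAction

variable {G : Type*} [AddCommGroup G] [DecidableEq G] {S : Finset G}

theorem image_sub_eq_self_iff_mem_stabilizer (c : G) :
    S.image (· - c) = S ↔ c ∈ stabilizer G S := by
  rw [← neg_mem_iff, mem_stabilizer_iff, ← Finset.image_vadd]
  simp only [vadd_eq_add, neg_add_eq_sub]

theorem notMem_stabilizer_of_xor_add_mem {a : G} (hS : ∀ x, Xor (x ∈ S) (x + a ∈ S)) :
    a ∉ stabilizer G S := fun ha => by
  have h0 := hS 0
  rw [xor_iff_not_iff, zero_add] at h0
  exact h0 (by simpa using (mem_stabilizer_finset.1 ha 0).symm)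

theorem xor_add_mem_of_sub_mem_stabilizer {a b : G} (hS : ∀ x, Xor (x ∈ S) (x + a ∈ S))
    (hab : b - a ∈ stabilizer G S) (x : G) : Xor (x ∈ S) (x + b ∈ S) := by
  rw [show x + b = (b - a) +ᵥ (x + a) by rw [vadd_eq_add]; abel, mem_stabilizer_finset.1 hab]
  exact hS x

end AddAction

theorem stmt11_general (f : ℕ) (S : Finset (ZMod (2 * f)))
    (hS : ∀ x : ZMod (2 * f), Xor' (x ∈ S) ((x + (f : ZMod (2 * f))) ∈ S))
    (d : ℕ) (hd : 0 < d)
    (hinv : S.image (fun s => s - (d : ZMod (2 * f))) = S)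
    (hmin : ∀ e : ℕ, 0 < e → S.image (fun s => s - (e : ZMod (2 * f))) = S → d ≤ e) :
    (d ∣ 2 * f ∧ ¬ d ∣ f) ∧ 2 ∣ d ∧
      ((Finset.range d).filter (fun j : ℕ => (((j : ℕ) : ZMod (2 * f)) ∈ S))).card = d / 2 := by
  set H := AddAction.stabilizer (ZMod (2 * f)) S
  have hdvd := AddSubgroup.natCast_mem_iff_dvd (H := H) hd
    ((AddAction.image_sub_eq_self_iff_mem_stabilizer _).1 hinv)
    fun e he heH => hmin e he ((AddAction.image_sub_eq_self_iff_mem_stabilizer _).2 heH)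
  have h2f : d ∣ 2 * f := (hdvd _).1 (by simp)
  have hnf : ¬d ∣ f := fun h => AddAction.notMem_stabilizer_of_xor_add_mem hS ((hdvd f).2 h)
  obtain ⟨e, t, rfl, hft⟩ := Nat.exists_eq_two_mul_of_dvd_two_mul_of_not_dvd h2f hnf
  have hSe : ∀ x : ZMod (2 * f), Xor (x ∈ S) (x + e ∈ S) := by
    refine AddAction.xor_add_mem_of_sub_mem_stabilizer hS ?_
    have hf : (f : ZMod (2 * f)) = e + ((2 * e * t : ℕ) : ZMod (2 * f)) := by
      rw [← Nat.cast_add, ← hft]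
    rw [hf, sub_add_cancel_left]
    exact neg_mem ((hdvd _).2 (dvd_mul_right _ t))
  refine ⟨⟨h2f, hnf⟩, dvd_mul_right 2 e, ?_⟩
  rw [Nat.mul_div_cancel_left e two_pos]
  exact card_filter_range_two_mul_of_xor fun j => by simpa using hSe j

/-- Let `S ⊆ ℤ/2fℤ` contain exactly one of `x, x+f` for each `x`, and let `d` be the
smallest positive integer with `S - d = S`. Then `d ∣ 2f`, `d ∤ f`, `d` is even, and
`#{0 ≤ j ≤ d-1 : j mod 2f ∈ S} = d/2`. -/
theorem stmt11 (f : ℕ) (hf : 1 ≤ f) (S : Finset (ZMod (2 * f)))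
    (hS : ∀ x : ZMod (2 * f), Xor' (x ∈ S) ((x + (f : ZMod (2 * f))) ∈ S))
    (d : ℕ) (hd : 0 < d)
    (hinv : S.image (fun s => s - (d : ZMod (2 * f))) = S)
    (hmin : ∀ e : ℕ, 0 < e → S.image (fun s => s - (e : ZMod (2 * f))) = S → d ≤ e) :
    (d ∣ 2 * f ∧ ¬ d ∣ f) ∧ 2 ∣ d ∧
      ((Finset.range d).filter (fun j : ℕ => (((j : ℕ) : ZMod (2 * f)) ∈ S))).card = d / 2 :=
  stmt11_general f S hS d hd hinv hmin
end

section
/- Let f ≥ 1, let ℤ^f/ℤ denote the quotient of ℤ^f by the diagonal copy of ℤ, let n_0 = (0,1,2,…,f-1) ∈ ℤ^f, and let the symmetric group 𝔖_f act on ℤ^f by permuting coordinates: σ(n)_i = n_{σ^{-1}(i)}. Let (ℤ^f/ℤ)_0 be the image in ℤ^f/ℤ of {m ∈ ℤ^f : Σ_i m_i = 0}. Then every element of ℤ^f/ℤ of the form σ(n_0) + f·m (with σ ∈ 𝔖_f, m ∈ ℤ^f/ℤ) can be written as σ'(n_0) + f·m' in ℤ^f/ℤ for a unique pair (σ', m')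 with σ' ∈ 𝔖_f and m' ∈ (ℤ^f/ℤ)_0. -/
/-- The diagonal copy of `ℤ` in `ℤ^f`. -/
def diagSub (f : ℕ) : Submodule ℤ (Fin f → ℤ) := Submodule.span ℤ {fun _ => (1 : ℤ)}

/-!
Lift everything to `ℤ^f`. A vector of the form `σ(n₀) + f • u` determines `σ` and `u`: they are
read off from the residues and quotients of its coordinates mod `f`. Its coordinate sum is
`0 + 1 + ⋯ + (f - 1) + f • ∑ u`, and within a class of `ℤ^f/ℤ` a vector is determined by its
coordinate sum. So the admissible pairs `(σ', m')` are the decompositions of the lift of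
`σ(n₀) + f • m` with coordinate sum `0 + 1 + ⋯ + (f - 1)`. For `m` the class of `v`, that lift is
`σ(n₀) + f • v - ∑ v`; its coordinates are pairwise distinct mod `f`, so it has exactly one such
decomposition.
-/

open Finset

variable {f : ℕ}

/-- `σ(n₀)`, where `n₀ = (0, 1, …, f - 1)`. -/
def permutedRange (σ : Equiv.Perm (Fin f)) : Fin f → ℤ := fun i => ((σ⁻¹ i : Fin f) : ℤ)

lemma permutedRange_nonneg (σ : Equiv.Perm (Fin f)) (i : Fin f) : 0 ≤ permutedRange σ i :=
  Int.natCast_nonneg _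

lemma permutedRange_lt (σ : Equiv.Perm (Fin f)) (i : Fin f) : permutedRange σ i < f :=
  Int.ofNat_lt.mpr (σ⁻¹ i).isLt

lemma permutedRange_injective : Function.Injective (permutedRange (f := f)) := by
  intro σ τ h
  refine inv_injective (Equiv.ext fun i => Fin.ext ?_)
  exact Nat.cast_injective (R := ℤ) (congrFun h i)

lemma sum_permutedRange (σ : Equiv.Perm (Fin f)) :
    ∑ i, permutedRange σ i = ∑ j : Fin f, (j : ℤ) :=
  Equiv.sum_comp σ⁻¹ (fun j : Fin f => (j : ℤ))

lemma sum_permutedRange_add_smul (σ : Equiv.Perm (Fin f)) (u : Fin f → ℤ) :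
    ∑ i, (permutedRange σ + (f : ℤ) • u) i = ∑ j : Fin f, (j : ℤ) + f * ∑ i, u i := by
  simp only [Pi.add_apply, Pi.smul_apply, smul_eq_mul, sum_add_distrib, ← mul_sum,
    sum_permutedRange]

lemma sum_add_const (x : Fin f → ℤ) (c : ℤ) :
    ∑ i, (x + fun _ : Fin f => c) i = ∑ i, x i + f * c := by
  simp [sum_add_distrib]

lemma mkQ_permutedRange_add_smul (σ : Equiv.Perm (Fin f)) (u : Fin f → ℤ) :
    (diagSub f).mkQ (permutedRange σ) + (f : ℤ) • (diagSub f).mkQ u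
      = (diagSub f).mkQ (permutedRange σ + (f : ℤ) • u) := by
  rw [map_add, map_smul]

lemma mkQ_diagSub_eq_iff {a b : Fin f → ℤ} :
    (diagSub f).mkQ a = (diagSub f).mkQ b ↔ ∃ c : ℤ, a = b + fun _ => c := by
  rw [Submodule.mkQ_apply, Submodule.mkQ_apply, Submodule.Quotient.eq, diagSub,
    Submodule.mem_span_singleton]
  have hconst (c : ℤ) : (c • fun _ : Fin f => (1 : ℤ)) = fun _ => c := funext fun _ => mul_one c
  simp only [hconst, eq_comm (b := a - b), sub_eq_iff_eq_add, add_comm b]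

lemma eq_of_mkQ_diagSub_eq_of_sum_eq {a b : Fin f → ℤ}
    (h : (diagSub f).mkQ a = (diagSub f).mkQ b) (hsum : ∑ i, a i = ∑ i, b i) : a = b := by
  obtain ⟨c, rfl⟩ := mkQ_diagSub_eq_iff.mp h
  have hfc : (f : ℤ) * c = 0 := by
    rwa [sum_add_const, add_eq_left] at hsum
  funext i
  have hc : c = 0 := (mul_eq_zero.mp hfc).resolve_left (by have := i.pos; positivity)
  simp [hc]

lemma permutedRange_emod (σ : Equiv.Perm (Fin f)) (i : Fin f) :
    permutedRange σ i % f = permutedRange σ i :=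
  Int.emod_eq_of_lt (permutedRange_nonneg σ i) (permutedRange_lt σ i)

lemma permutedRange_add_mul_emod (σ : Equiv.Perm (Fin f)) (u : Fin f → ℤ) (i : Fin f) :
    (permutedRange σ i + f * u i) % f = permutedRange σ i := by
  rw [Int.add_mul_emod_self_left, permutedRange_emod]

lemma permutedRange_add_smul_injective {σ τ : Equiv.Perm (Fin f)} {u v : Fin f → ℤ}
    (h : permutedRange σ + (f : ℤ) • u = permutedRange τ + (f : ℤ) • v) : σ = τ ∧ u = v := by
  have hi (i : Fin f) : permutedRange σ i + f * u i = permutedRange τ i + f * v i :=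
    congrFun h i
  have hperm : permutedRange σ = permutedRange τ := funext fun i => by
    rw [← permutedRange_add_mul_emod σ u, ← permutedRange_add_mul_emod τ v, hi]
  refine ⟨permutedRange_injective hperm, funext fun i => ?_⟩
  have := hi i
  rw [congrFun hperm i, add_right_inj] at this
  exact mul_left_cancel₀ (by have := i.pos; positivity) this

lemma exists_permutedRange_add_smul_of_emod_injective (x : Fin f → ℤ)
    (hx : ∀ i j, x i % f = x j % f → i = j) : ∃ σ u, x = permutedRange σ + (f : ℤ) • u := by
  have hrange (i : Fin f) : 0 ≤ x i % f ∧ x i % f < f := by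
    have : (0 : ℤ) < f := by have := i.pos; positivity
    exact ⟨Int.emod_nonneg _ this.ne', Int.emod_lt_of_pos _ this⟩
  let r : Fin f → Fin f := fun i => ⟨(x i % f).toNat, by have := hrange i; omega⟩
  have hr (i : Fin f) : ((r i : ℕ) : ℤ) = x i % f := Int.toNat_of_nonneg (hrange i).1
  have hinj : Function.Injective r := fun i j h => hx i j (by rw [← hr, ← hr, h])
  refine ⟨(Equiv.ofBijective r hinj.bijective_of_finite).symm, fun i => x i / f,
    funext fun i => ?_⟩
  simp only [permutedRange, Pi.add_apply, Pi.smul_apply, smul_eq_mul, Equiv.Perm.inv_def,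
    Equiv.symm_symm, Equiv.ofBijective_apply, hr, Int.emod_add_mul_ediv]

lemma exists_permutedRange_add_smul_add_const (σ : Equiv.Perm (Fin f)) (v : Fin f → ℤ) (c : ℤ) :
    ∃ τ u, permutedRange σ + (f : ℤ) • v + (fun _ => c) = permutedRange τ + (f : ℤ) • u := by
  refine exists_permutedRange_add_smul_of_emod_injective _ fun i j h => ?_
  simp only [Pi.add_apply, Pi.smul_apply, smul_eq_mul, add_right_comm _ _ c,
    Int.add_mul_emod_self_left] at h
  have hmod : permutedRange σ i ≡ permutedRange σ j [ZMOD f] := Int.ModEq.add_right_cancel' c h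
  rw [Int.ModEq, permutedRange_emod, permutedRange_emod] at hmod
  exact (σ⁻¹).injective (Fin.ext (Nat.cast_injective (R := ℤ) hmod))

theorem stmt12_general (f : ℕ)
    (σ : Equiv.Perm (Fin f)) (m : (Fin f → ℤ) ⧸ diagSub f) :
    ∃! x : Equiv.Perm (Fin f) × ((Fin f → ℤ) ⧸ diagSub f),
      x.2 ∈ (diagSub f).mkQ '' {v : Fin f → ℤ | ∑ i, v i = 0} ∧
      (diagSub f).mkQ (fun i => ((x.1⁻¹ i : Fin f) : ℤ)) + (f : ℤ) • x.2
        = (diagSub f).mkQ (fun i => ((σ⁻¹ i : Fin f) : ℤ)) + (f : ℤ) • m := by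
  obtain ⟨v, rfl⟩ := (diagSub f).mkQ_surjective m
  obtain ⟨τ, u, hτu⟩ := exists_permutedRange_add_smul_add_const σ v (-∑ i, v i)
  have hu : ∑ i, u i = 0 := by
    have hsum := congrArg (fun x => ∑ i, x i) hτu
    rw [sum_add_const, sum_permutedRange_add_smul, sum_permutedRange_add_smul] at hsum
    rcases f.eq_zero_or_pos with rfl | hf
    · simp
    · have hfu : (f : ℤ) * ∑ i, u i = 0 := by linarith
      exact (mul_eq_zero.mp hfu).resolve_left (by positivity)
  have hclass : (diagSub f).mkQ (permutedRange τ) + (f : ℤ) • (diagSub f).mkQ u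
      = (diagSub f).mkQ (permutedRange σ) + (f : ℤ) • (diagSub f).mkQ v := by
    rw [mkQ_permutedRange_add_smul, mkQ_permutedRange_add_smul]
    exact mkQ_diagSub_eq_iff.mpr ⟨_, hτu.symm⟩
  refine ⟨(τ, (diagSub f).mkQ u), ⟨⟨u, hu, rfl⟩, hclass⟩, ?_⟩
  rintro ⟨τ', _⟩ ⟨⟨u', hu', rfl⟩, h⟩
  have hclass' : (diagSub f).mkQ (permutedRange τ') + (f : ℤ) • (diagSub f).mkQ u'
      = (diagSub f).mkQ (permutedRange τ) + (f : ℤ) • (diagSub f).mkQ u := h.trans hclass.symm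
  rw [mkQ_permutedRange_add_smul, mkQ_permutedRange_add_smul] at hclass'
  have hlift := eq_of_mkQ_diagSub_eq_of_sum_eq hclass'
    (by rw [sum_permutedRange_add_smul, sum_permutedRange_add_smul, hu, hu'])
  obtain ⟨rfl, rfl⟩ := permutedRange_add_smul_injective hlift
  rfl

/-- In `ℤ^f/ℤ`, every element of the form `σ(n_0) + f·m` (with `n_0 = (0,1,…,f-1)`,
`σ ∈ 𝔖_f`, `m ∈ ℤ^f/ℤ`) can be written as `σ'(n_0) + f·m'` for a unique pair `(σ', m')`
with `σ' ∈ 𝔖_f` and `m'` in the image of `{m : ∑ m_i = 0}`. -/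
theorem stmt12 (f : ℕ) (hf : 1 ≤ f)
    (σ : Equiv.Perm (Fin f)) (m : (Fin f → ℤ) ⧸ diagSub f) :
    ∃! x : Equiv.Perm (Fin f) × ((Fin f → ℤ) ⧸ diagSub f),
      x.2 ∈ (diagSub f).mkQ '' {v : Fin f → ℤ | ∑ i, v i = 0} ∧
      (diagSub f).mkQ (fun i => ((x.1⁻¹ i : Fin f) : ℤ)) + (f : ℤ) • x.2
        = (diagSub f).mkQ (fun i => ((σ⁻¹ i : Fin f) : ℤ)) + (f : ℤ) • m :=
  stmt12_general f σ m
end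

section
/- Let A be a commutative noetherian ring, φ : A → A a ring endomorphism, and 𝔭 ⊆ A an ideal with φ(𝔭) ⊆ 𝔭^q for some integer q ≥ 2. Let M, N be A-modules equipped with φ-semilinear endomorphisms φ_M, φ_N, and assume M is generated as an A-module by the image of φ_M. If f : M → N is an A-linear map commuting with the semilinear endomorphisms (f ∘ φ_M = φ_N ∘ f) and satisfying f(M) ⊆ 𝔭·N, then f(M) ⊆ 𝔭^{q^n}·N for every n ≥ 0. In particular, if ∩_{m≥0} 𝔭^m N = 0 then f = 0. -/
/-!
Since `M` is spanned by `φ_M(M)`, the image of `f` is spanned by `f(φ_M(M)) = φ_N(f(M))`.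
A `φ`-semilinear map sends `I • N` into `φ(I) • N`, so `f(M) ⊆ 𝔭^k N` forces
`f(M) ⊆ φ(𝔭^k) N ⊆ 𝔭^(qk) N`; iterating from `k = 1` gives the exponents `q^n`,
which are unbounded.
-/

open Submodule

section

variable {A : Type*} [CommSemiring A]

theorem Ideal.map_pow_le_pow_mul {φ : A →+* A} {I : Ideal A} {q : ℕ} (h : I.map φ ≤ I ^ q)
    (k : ℕ) : (I ^ k).map φ ≤ I ^ (q * k) := by
  rw [Ideal.map_pow, pow_mul]
  exact Ideal.pow_right_mono h k

variable {M N : Type*} [AddCommMonoid M] [Module A M] [AddCommMonoid N] [Module A N]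

theorem Submodule.smul_top_le_comap_of_map_le {φ : A →+* A} (g : N →ₛₗ[φ] N)
    {I J : Ideal A} (h : I.map φ ≤ J) :
    I • (⊤ : Submodule A N) ≤ (J • ⊤ : Submodule A N).comap g := by
  refine smul_le.2 fun a ha y _ => ?_
  rw [mem_comap, map_smulₛₗ]
  exact smul_mem_smul (h (Ideal.mem_map_of_mem φ ha)) trivial

theorem LinearMap.range_le_of_semiconj {φ : A →+* A} {φM : M → M} (g : N →ₛₗ[φ] N)
    (hgen : span A (Set.range φM) = ⊤) (f : M →ₗ[A] N) (hcomm : Function.Semiconj f φM g)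
    {P : Submodule A N} (hP : ∀ x, g (f x) ∈ P) : LinearMap.range f ≤ P := by
  rw [LinearMap.range_eq_map, ← hgen, map_span, span_le, ← Set.range_comp, hcomm.comp_eq]
  exact Set.range_subset_iff.2 hP

theorem LinearMap.range_le_pow_pow_smul_top {φ : A →+* A} {φM : M → M} (g : N →ₛₗ[φ] N)
    (hgen : span A (Set.range φM) = ⊤) (f : M →ₗ[A] N) (hcomm : Function.Semiconj f φM g)
    {𝔭 : Ideal A} {q : ℕ} (hφ : 𝔭.map φ ≤ 𝔭 ^ q) (hf : LinearMap.range f ≤ 𝔭 • ⊤)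
    (n : ℕ) : LinearMap.range f ≤ 𝔭 ^ (q ^ n) • ⊤ := by
  induction n with
  | zero => simpa using hf
  | succ n ih =>
    refine range_le_of_semiconj g hgen f hcomm fun x => ?_
    rw [pow_succ', ← mem_comap]
    exact smul_top_le_comap_of_map_le g (Ideal.map_pow_le_pow_mul hφ _) (ih ⟨x, rfl⟩)

theorem Submodule.iInf_pow_pow_smul_top_eq_iInf_pow_smul_top {I : Ideal A} {q : ℕ} (hq : 1 < q) :
    ⨅ m : ℕ, I ^ (q ^ m) • (⊤ : Submodule A N) = ⨅ m : ℕ, I ^ m • ⊤ := by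
  refine le_antisymm (le_iInf fun m => iInf_le_of_le m ?_) (le_iInf fun m => iInf_le _ (q ^ m))
  exact smul_mono_left (Ideal.pow_le_pow_right (Nat.lt_pow_self hq).le)

end

theorem stmt14_general {A : Type*} [CommRing A] (φ : A →+* A)
    (𝔭 : Ideal A) (q : ℕ) (hq : 2 ≤ q) (hφ : ∀ a ∈ 𝔭, φ a ∈ 𝔭 ^ q)
    (M N : Type*) [AddCommGroup M] [Module A M] [AddCommGroup N] [Module A N]
    (φM : M → M) (φN : N → N)
    (hφNadd : ∀ x y : N, φN (x + y) = φN x + φN y)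
    (hφN : ∀ (a : A) (x : N), φN (a • x) = φ a • φN x)
    (hgen : Submodule.span A (Set.range φM) = ⊤)
    (f : M →ₗ[A] N) (hcomm : ∀ x : M, f (φM x) = φN (f x))
    (hf : ∀ x : M, f x ∈ 𝔭 • (⊤ : Submodule A N)) :
    (∀ n : ℕ, ∀ x : M, f x ∈ (𝔭 ^ (q ^ n)) • (⊤ : Submodule A N)) ∧
    ((⨅ m : ℕ, (𝔭 ^ m) • (⊤ : Submodule A N)) = ⊥ → f = 0) := by
  let g : N →ₛₗ[φ] N := { toFun := φN, map_add' := hφNadd, map_smul' := hφN }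
  have hpow := LinearMap.range_le_pow_pow_smul_top g hgen f hcomm
    (Ideal.map_le_iff_le_comap.2 hφ) (by rintro _ ⟨x, rfl⟩; exact hf x)
  refine ⟨fun n x => hpow n ⟨x, rfl⟩, fun hinf => ?_⟩
  rw [← LinearMap.range_eq_bot, eq_bot_iff, ← hinf,
    ← iInf_pow_pow_smul_top_eq_iInf_pow_smul_top hq]
  exact le_iInf hpow

/-- Let `φ : A → A` with `φ(𝔭) ⊆ 𝔭^q` (`q ≥ 2`), `M` generated by the image of a
`φ`-semilinear `φ_M`, and `f : M → N` an `A`-linear map commuting with the semilinear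
endomorphisms and with `f(M) ⊆ 𝔭·N`. Then `f(M) ⊆ 𝔭^(q^n)·N` for all `n`, and `f = 0`
if `∩_m 𝔭^m N = 0`. -/
theorem stmt14 {A : Type*} [CommRing A] [IsNoetherianRing A] (φ : A →+* A)
    (𝔭 : Ideal A) (q : ℕ) (hq : 2 ≤ q) (hφ : ∀ a ∈ 𝔭, φ a ∈ 𝔭 ^ q)
    (M N : Type*) [AddCommGroup M] [Module A M] [AddCommGroup N] [Module A N]
    (φM : M → M) (φN : N → N)
    (hφMadd : ∀ x y : M, φM (x + y) = φM x + φM y)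
    (hφM : ∀ (a : A) (x : M), φM (a • x) = φ a • φM x)
    (hφNadd : ∀ x y : N, φN (x + y) = φN x + φN y)
    (hφN : ∀ (a : A) (x : N), φN (a • x) = φ a • φN x)
    (hgen : Submodule.span A (Set.range φM) = ⊤)
    (f : M →ₗ[A] N) (hcomm : ∀ x : M, f (φM x) = φN (f x))
    (hf : ∀ x : M, f x ∈ 𝔭 • (⊤ : Submodule A N)) :
    (∀ n : ℕ, ∀ x : M, f x ∈ (𝔭 ^ (q ^ n)) • (⊤ : Submodule A N)) ∧
    ((⨅ m : ℕ, (𝔭 ^ m) • (⊤ : Submodule A N)) = ⊥ → f = 0) :=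
  stmt14_general φ 𝔭 q hq hφ M N φM φN hφNadd hφN hgen f hcomm hf
end
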